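/- arXiv:1512.03641 — 6 statements merged into one kernel-verified Lean document; each statement's English description precedes it below -/
import Mathlib

section
/- Let ρ : L^∞ → ℝ be normalized and cash-subadditive, and suppose ρ admits a dual representation ρ(X) = sup_{X' ∈ P} { E[X'·(−X)] − ρ*(X') } over a set P ⊆ L¹₊ of nonnegative integrable random variables, where ρ* is the convex conjugate of ρ. Then every X' ∈ P with ρ*(X') < +∞ satisfies E[X'] ≤ 1. -/
/-!
Testing the conjugate against the constant position `-m` gives
`ρ*(X') ≥ m E[X'] - ρ(-m) ≥ m (E[X'] - 1)` for every `m ≥ 0`, because cash-subadditivity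
and normalization give `ρ(-m) ≤ ρ(0) + m = m`. A finite `ρ*(X')` therefore forces
`E[X'] - 1 ≤ 0`.
-/

open MeasureTheory

theorem apply_neg_const_le_of_cash_subadditive {Ω : Type*} {ρ : (Ω → ℝ) → ℝ} (hnorm : ρ 0 = 0)
    (hcsa : ∀ (X : Ω → ℝ) (m : ℝ), 0 ≤ m → ρ X - m ≤ ρ (fun ω => X ω + m))
    {m : ℝ} (hm : 0 ≤ m) : ρ (fun _ => -m) ≤ m := by
  have h := hcsa (fun _ => -m) m hm
  simp only [neg_add_cancel] at h
  rw [← Pi.zero_def, hnorm] at h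
  linarith

theorem nonpos_of_forall_nonneg_mul_le {a r : ℝ} (h : ∀ m : ℝ, 0 ≤ m → m * a ≤ r) : a ≤ 0 := by
  by_contra! ha
  have hm := h ((|r| + 1) / a) (by positivity)
  rw [div_mul_cancel₀ _ ha.ne'] at hm
  linarith [le_abs_self r]

theorem EReal.nonpos_of_forall_nonneg_mul_le {a : ℝ} {e : EReal} (he : e < ⊤)
    (h : ∀ m : ℝ, 0 ≤ m → ((m * a : ℝ) : EReal) ≤ e) : a ≤ 0 :=
  _root_.nonpos_of_forall_nonneg_mul_le fun m hm =>
    EReal.coe_le_coe_iff.mp ((h m hm).trans (EReal.le_coe_toReal he.ne))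

theorem integral_mul_neg_neg_const {Ω : Type*} [MeasurableSpace Ω] (μ : Measure Ω)
    (f : Ω → ℝ) (m : ℝ) : ∫ ω, f ω * -(-m) ∂μ = m * ∫ ω, f ω ∂μ := by
  rw [neg_neg, integral_mul_const, mul_comm]

theorem stmt3_general {Ω : Type*} [MeasurableSpace Ω] (μ : Measure Ω)
    (ρ : (Ω → ℝ) → ℝ)
    (hnorm : ρ 0 = 0)
    (hcsa : ∀ (X : Ω → ℝ) (m : ℝ), 0 ≤ m → ρ X - m ≤ ρ (fun ω => X ω + m))
    (Pset : Set (Ω → ℝ))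
    (ρstar : (Ω → ℝ) → EReal)
    (hstar : ∀ X' : Ω → ℝ, ρstar X' =
      ⨆ X : {X : Ω → ℝ // Measurable X ∧ ∃ C, ∀ ω, |X ω| ≤ C},
        ((∫ ω, X' ω * (-(X.1 ω)) ∂μ - ρ X.1 : ℝ) : EReal)) :
    ∀ X' ∈ Pset, ρstar X' < ⊤ → ∫ ω, X' ω ∂μ ≤ 1 := by
  intro X' _ htop
  suffices ∫ ω, X' ω ∂μ - 1 ≤ 0 by linarith
  refine EReal.nonpos_of_forall_nonneg_mul_le htop fun m hm => ?_
  have hconst : Measurable (fun _ : Ω => -m) ∧ ∃ C, ∀ _ : Ω, |(-m : ℝ)| ≤ C :=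
    ⟨measurable_const, m, fun _ => by rw [abs_neg, abs_of_nonneg hm]⟩
  rw [hstar X']
  refine le_trans ?_ (le_iSup _ ⟨fun _ => -m, hconst⟩)
  have hρ := apply_neg_const_le_of_cash_subadditive hnorm hcsa hm
  rw [EReal.coe_le_coe_iff, integral_mul_neg_neg_const]
  linarith

/-- If a normalized cash-subadditive risk measure `ρ` admits the dual
representation `ρ(X) = sup_{X' ∈ Pset} { E[X'·(−X)] − ρ*(X') }` over a set `Pset` of
nonnegative integrable random variables, where `ρ*` is the Fenchel–Moreau
conjugate of `ρ` (computed over L^∞), then every `X' ∈ Pset` with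
`ρ*(X') < +∞` satisfies `E[X'] ≤ 1`. -/
theorem stmt3 {Ω : Type*} [MeasurableSpace Ω] (μ : Measure Ω) [IsProbabilityMeasure μ]
    (ρ : (Ω → ℝ) → ℝ)
    (hnorm : ρ 0 = 0)
    (hcsa : ∀ (X : Ω → ℝ) (m : ℝ), 0 ≤ m → ρ X - m ≤ ρ (fun ω => X ω + m))
    (Pset : Set (Ω → ℝ))
    (hPset : ∀ X' ∈ Pset, (∀ᵐ ω ∂μ, 0 ≤ X' ω) ∧ Integrable X' μ)
    (ρstar : (Ω → ℝ) → EReal)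
    (hstar : ∀ X' : Ω → ℝ, ρstar X' =
      ⨆ X : {X : Ω → ℝ // Measurable X ∧ ∃ C, ∀ ω, |X ω| ≤ C},
        ((∫ ω, X' ω * (-(X.1 ω)) ∂μ - ρ X.1 : ℝ) : EReal))
    (hrep : ∀ X : Ω → ℝ, Measurable X → (∃ C, ∀ ω, |X ω| ≤ C) →
      (ρ X : EReal) = ⨆ X' : Pset, (((∫ ω, X'.1 ω * (-(X ω)) ∂μ : ℝ) : EReal) - ρstar X'.1)) :
    ∀ X' ∈ Pset, ρstar X' < ⊤ → ∫ ω, X' ω ∂μ ≤ 1 :=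
  stmt3_general μ ρ hnorm hcsa Pset ρstar hstar
end

section
/- Let Q be a probability measure absolutely continuous with respect to P on (Ω, F_T), let a ∈ [0,1], and set μ = a·Q (a subprobability). Let Z_t = E_P[dQ/dP | F_t], N = {Z_t = 0}, and define D_t = a·Z_t and the probability measure Q̃ by Q̃(B) = ∫_{B∖N} Z_t⁻¹ dQ + P(B ∩ N) for B ∈ F_T. Then: (i) Q̃ is a probability measure with Q̃ = P on F_t; (ii) μ(C) = ∫_C D_t dQ̃ for every C ∈ F_T, i.e., E_μ[X] = E_P[D_t · E_{Q̃}[X | F_t]] for all X ∈ L^∞(F_T). -/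
open MeasureTheory
open scoped ENNReal

/-!
On `F_t`, `Q` has density `Z_t` with respect to `P`: the conditional expectation of `dQ/dP` is
the Radon–Nikodym derivative of the trimmed measures. Hence `Z_t > 0` `Q`-a.e., `Q(N) = 0`, and
`Q̃`, which is `Z_t⁻¹ • Q` off `N` and `P` on `N`, satisfies `Z_t • Q̃ = Q`; on `F_t`-sets it
gives `Q̃(B) = ∫_{B∖N} Z_t⁻¹ Z_t dP + P(B ∩ N) = P(B)`. The expectation identity then comes from
moving the `F_t`-measurable density in and out of `E_{Q̃}[· | F_t]`:
`E_Q[X] = E_{Q̃}[Z_t X] = E_{Q̃}[Z_t E_{Q̃}[X|F_t]] = E_Q[E_{Q̃}[X|F_t]]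
= E_P[Z_t E_{Q̃}[X|F_t]]`.
-/

section WithDensityOfReal

variable {α : Type*} [MeasurableSpace α] {μ : Measure α} {f : α → ℝ}

theorem integral_withDensity_ofReal (hf : Measurable f) (hf0 : 0 ≤ᵐ[μ] f) (g : α → ℝ) :
    ∫ x, g x ∂μ.withDensity (fun x => ENNReal.ofReal (f x)) = ∫ x, f x * g x ∂μ := by
  rw [integral_withDensity_eq_integral_toReal_smul hf.ennreal_ofReal
    (ae_of_all _ fun _ => ENNReal.ofReal_lt_top)]
  refine integral_congr_ae ?_
  filter_upwards [hf0] with x hx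
  rw [ENNReal.toReal_ofReal hx, smul_eq_mul]

theorem integrable_withDensity_ofReal_iff (hf : Measurable f) (hf0 : 0 ≤ᵐ[μ] f)
    {g : α → ℝ} :
    Integrable g (μ.withDensity fun x => ENNReal.ofReal (f x)) ↔
      Integrable (fun x => f x * g x) μ := by
  rw [integrable_withDensity_iff_integrable_smul' hf.ennreal_ofReal
    (ae_of_all _ fun _ => ENNReal.ofReal_lt_top)]
  refine integrable_congr ?_
  filter_upwards [hf0] with x hx
  rw [ENNReal.toReal_ofReal hx, smul_eq_mul]

end WithDensityOfReal

theorem integral_mul_condExp_of_stronglyMeasurable {α : Type*} {m m0 : MeasurableSpace α}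
    {μ : Measure[m0] α} (hm : m ≤ m0) [SigmaFinite (μ.trim hm)] {f g : α → ℝ}
    (hf : StronglyMeasurable[m] f) (hfg : Integrable (f * g) μ) (hg : Integrable g μ) :
    ∫ x, f x * μ[g|m] x ∂μ = ∫ x, f x * g x ∂μ := by
  calc ∫ x, f x * μ[g|m] x ∂μ = ∫ x, μ[f * g|m] x ∂μ :=
        integral_congr_ae (condExp_mul_of_stronglyMeasurable_left hf hfg hg).symm
    _ = ∫ x, f x * g x ∂μ := integral_condExp hm

section DensityOnSubSigmaAlgebra

variable {Ω : Type*} {m0 mT : MeasurableSpace Ω}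

theorem trim_eq_withDensity_condExp_rnDeriv (hm : m0 ≤ mT) {P Q : Measure[mT] Ω}
    [IsFiniteMeasure P] [IsFiniteMeasure Q] (hQP : Q ≪ P) :
    Q.trim hm = (P.trim hm).withDensity
      fun ω => ENNReal.ofReal (P[fun ω => (Q.rnDeriv P ω).toReal|m0] ω) := by
  rw [← withDensity_congr_ae (rnDeriv_trim hm hQP),
    Measure.withDensity_rnDeriv_eq _ _ (hQP.trim hm)]

/-- The measure `Q̃` of the statement. -/
noncomputable def tiltedMeasure (P Q : Measure[mT] Ω) (Z : Ω → ℝ) : Measure[mT] Ω :=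
  (Q.restrict {ω | Z ω = 0}ᶜ).withDensity (fun ω => ENNReal.ofReal (Z ω)⁻¹) +
    P.restrict {ω | Z ω = 0}

variable {P Q : Measure[mT] Ω} {Z : Ω → ℝ}

theorem setLIntegral_eq_setLIntegral_mul_of_trim_eq_withDensity (hm : m0 ≤ mT)
    (hZm : Measurable[m0] Z)
    (hZ : Q.trim hm = (P.trim hm).withDensity fun ω => ENNReal.ofReal (Z ω))
    {g : Ω → ℝ≥0∞} (hg : Measurable[m0] g) {S : Set Ω} (hS : MeasurableSet[m0] S) :
    ∫⁻ ω in S, g ω ∂Q = ∫⁻ ω in S, ENNReal.ofReal (Z ω) * g ω ∂P := by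
  rw [← setLIntegral_trim hm hg hS, hZ,
    setLIntegral_withDensity_eq_setLIntegral_mul _ hZm.ennreal_ofReal hg hS,
    setLIntegral_trim hm (hZm.ennreal_ofReal.mul hg) hS]
  rfl

theorem ae_pos_of_trim_eq_withDensity (hm : m0 ≤ mT) (hZm : Measurable[m0] Z)
    (hZ : Q.trim hm = (P.trim hm).withDensity fun ω => ENNReal.ofReal (Z ω)) :
    ∀ᵐ ω ∂Q, 0 < Z ω := by
  have hS : MeasurableSet[m0] {ω | Z ω ≤ 0} := hZm measurableSet_Iic
  simp only [ae_iff, not_lt]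
  rw [← setLIntegral_one, setLIntegral_eq_setLIntegral_mul_of_trim_eq_withDensity hm hZm hZ
    measurable_const hS]
  exact setLIntegral_eq_zero (hm _ hS) fun ω hω => by simp [ENNReal.ofReal_eq_zero.2 hω]

theorem tiltedMeasure_apply {B : Set Ω} (hB : MeasurableSet[mT] B) :
    tiltedMeasure P Q Z B =
      ∫⁻ ω in B \ {ω | Z ω = 0}, ENNReal.ofReal (Z ω)⁻¹ ∂Q +
        P (B ∩ {ω | Z ω = 0}) := by
  rw [tiltedMeasure, Measure.add_apply, withDensity_apply _ hB, Measure.restrict_restrict hB,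
    Measure.restrict_apply hB, Set.sdiff_eq]

theorem trim_tiltedMeasure (hm : m0 ≤ mT) (hZm : Measurable[m0] Z) (hZ0 : 0 ≤ᵐ[P] Z)
    (hZ : Q.trim hm = (P.trim hm).withDensity fun ω => ENNReal.ofReal (Z ω)) :
    (tiltedMeasure P Q Z).trim hm = P.trim hm := by
  have hN : MeasurableSet[m0] {ω | Z ω = 0} := hZm (measurableSet_singleton 0)
  refine @Measure.ext _ m0 _ _ fun B hB => ?_
  have hBN : MeasurableSet[m0] (B \ {ω | Z ω = 0}) := hB.diff hN
  rw [trim_measurableSet_eq hm hB, trim_measurableSet_eq hm hB, tiltedMeasure_apply (hm B hB),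
    setLIntegral_eq_setLIntegral_mul_of_trim_eq_withDensity hm hZm hZ
      (g := fun ω => ENNReal.ofReal (Z ω)⁻¹) (measurable_inv.comp hZm).ennreal_ofReal hBN,
    setLIntegral_congr_fun_ae (hm _ hBN) (g := fun _ => 1), setLIntegral_one,
    measure_sdiff_add_inter B (hm _ hN)]
  filter_upwards [hZ0] with ω hω hωN
  have hpos : 0 < Z ω := lt_of_le_of_ne hω (Ne.symm hωN.2)
  rw [← ENNReal.ofReal_mul hpos.le, mul_inv_cancel₀ hpos.ne', ENNReal.ofReal_one]

theorem withDensity_tiltedMeasure (hm : m0 ≤ mT) (hZm : Measurable[m0] Z)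
    (hZ : Q.trim hm = (P.trim hm).withDensity fun ω => ENNReal.ofReal (Z ω)) :
    (tiltedMeasure P Q Z).withDensity (fun ω => ENNReal.ofReal (Z ω)) = Q := by
  have hZpos := ae_pos_of_trim_eq_withDensity hm hZm hZ
  have hZmT : Measurable[mT] Z := hZm.mono hm le_rfl
  have hQN : Q.restrict {ω | Z ω = 0}ᶜ = Q :=
    Measure.restrict_eq_self_of_ae_mem (hZpos.mono fun ω hω => hω.ne')
  have hPN : (P.restrict {ω | Z ω = 0}).withDensity (fun ω => ENNReal.ofReal (Z ω)) = 0 := by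
    rw [← withDensity_zero]
    refine withDensity_congr_ae ?_
    filter_upwards [ae_restrict_mem (hm _ (hZm (measurableSet_singleton 0)))] with ω hω
    simp [show Z ω = 0 from hω]
  rw [tiltedMeasure, withDensity_add_measure, hPN, add_zero, hQN,
    ← withDensity_mul _ (f := fun ω => ENNReal.ofReal (Z ω)⁻¹)
      (measurable_inv.comp hZmT).ennreal_ofReal hZmT.ennreal_ofReal]
  conv_rhs => rw [← withDensity_one (μ := Q)]
  refine withDensity_congr_ae ?_
  filter_upwards [hZpos] with ω hω
  rw [Pi.mul_apply, ← ENNReal.ofReal_mul (inv_nonneg.2 hω.le), inv_mul_cancel₀ hω.ne',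
    ENNReal.ofReal_one, Pi.one_apply]

theorem integral_eq_integral_mul_of_trim_eq_withDensity (hm : m0 ≤ mT)
    (hZm : StronglyMeasurable[m0] Z) (hZ0 : 0 ≤ᵐ[P] Z)
    (hZ : Q.trim hm = (P.trim hm).withDensity fun ω => ENNReal.ofReal (Z ω))
    {Y : Ω → ℝ} (hY : StronglyMeasurable[m0] Y) :
    ∫ ω, Y ω ∂Q = ∫ ω, Z ω * Y ω ∂P := by
  have hZ0' : 0 ≤ᵐ[P.trim hm] Z :=
    StronglyMeasurable.ae_le_trim_of_stronglyMeasurable hm stronglyMeasurable_const hZm hZ0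
  rw [integral_trim hm hY, hZ, @integral_withDensity_ofReal Ω m0 _ _ hZm.measurable hZ0',
    ← integral_trim hm (f := fun ω => Z ω * Y ω) (hZm.mul hY)]

theorem integral_eq_integral_mul_condExp_tiltedMeasure (hm : m0 ≤ mT) [SigmaFinite (P.trim hm)]
    (hZm : StronglyMeasurable[m0] Z) (hZ0 : 0 ≤ᵐ[P] Z)
    (hZ : Q.trim hm = (P.trim hm).withDensity fun ω => ENNReal.ofReal (Z ω))
    {X : Ω → ℝ} (hXQ : Integrable X Q) (hXQt : Integrable X (tiltedMeasure P Q Z)) :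
    ∫ ω, X ω ∂Q = ∫ ω, Z ω * (tiltedMeasure P Q Z)[X|m0] ω ∂P := by
  set Qt := tiltedMeasure P Q Z
  have hQt := trim_tiltedMeasure hm hZm.measurable hZ0 hZ
  have hQ := withDensity_tiltedMeasure hm hZm.measurable hZ
  have : SigmaFinite (Qt.trim hm) := hQt ▸ inferInstance
  have hZ0Qt : 0 ≤ᵐ[Qt] Z := ae_of_ae_trim hm <| by
    rw [hQt]
    exact StronglyMeasurable.ae_le_trim_of_stronglyMeasurable hm stronglyMeasurable_const hZm hZ0
  have hZmT : Measurable[mT] Z := hZm.measurable.mono hm le_rfl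
  have hZXQt : Integrable (fun ω => Z ω * X ω) Qt := by
    rwa [← integrable_withDensity_ofReal_iff hZmT hZ0Qt, hQ]
  calc ∫ ω, X ω ∂Q = ∫ ω, Z ω * X ω ∂Qt := by
        rw [← integral_withDensity_ofReal hZmT hZ0Qt, hQ]
    _ = ∫ ω, Z ω * Qt[X|m0] ω ∂Qt :=
        (integral_mul_condExp_of_stronglyMeasurable hm hZm hZXQt hXQt).symm
    _ = ∫ ω, Qt[X|m0] ω ∂Q := by
        rw [← integral_withDensity_ofReal hZmT hZ0Qt, hQ]
    _ = ∫ ω, Z ω * Qt[X|m0] ω ∂P :=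
        integral_eq_integral_mul_of_trim_eq_withDensity hm hZm hZ0 hZ stronglyMeasurable_condExp

end DensityOnSubSigmaAlgebra

/-- Decomposition of a subprobability `μ = a·Q` (with `Q ≪ P`) as `μ = D_t·Q̃`,
where `Z_t = E_P[dQ/dP|F_t]`, `N = {Z_t = 0}`, `D_t = a·Z_t` and
`Q̃(B) = ∫_{B∖N} Z_t⁻¹ dQ + P(B ∩ N)`. Then `Q̃` is a probability measure
agreeing with `P` on `F_t`, and `μ(C) = ∫_C D_t dQ̃` for all `C ∈ F_T`, i.e.
`E_μ[X] = E_P[D_t · E_{Q̃}[X|F_t]]` for all `X ∈ L^∞(F_T)`. -/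
theorem stmt7 {Ω : Type*} {m0 mT : MeasurableSpace Ω} (hm0 : m0 ≤ mT)
    (P Q : @Measure Ω mT) [IsProbabilityMeasure P] [IsProbabilityMeasure Q]
    (hQP : Q ≪ P)
    (a : ℝ) (ha : a ∈ Set.Icc (0:ℝ) 1)
    (Z : Ω → ℝ) (hZ : Z = P[fun ω => (Q.rnDeriv P ω).toReal|m0])
    (N : Set Ω) (hN : N = {ω | Z ω = 0})
    (D : Ω → ℝ) (hD : D = fun ω => a * Z ω)
    (Qt : @Measure Ω mT)
    (hQt : ∀ B : Set Ω, MeasurableSet[mT] B →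
      Qt B = ∫⁻ ω in B \ N, ENNReal.ofReal (Z ω)⁻¹ ∂Q + P (B ∩ N)) :
    -- (i) Q̃ is a probability measure reducing to P on F_t
    (IsProbabilityMeasure Qt ∧ ∀ B : Set Ω, MeasurableSet[m0] B → Qt B = P B) ∧
    -- (ii) μ = D_t · Q̃ on F_T
    (∀ C : Set Ω, MeasurableSet[mT] C →
      ENNReal.ofReal a * Q C = ∫⁻ ω in C, ENNReal.ofReal (D ω) ∂Qt) ∧
    -- equivalently, E_μ[X] = E_P[D_t E_{Q̃}[X|F_t]] for bounded X
    (∀ X : Ω → ℝ, Measurable[mT] X → (∃ C, ∀ ω, |X ω| ≤ C) →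
      a * ∫ ω, X ω ∂Q = ∫ ω, D ω * (Qt[X|m0]) ω ∂P) := by
  have hZm : StronglyMeasurable[m0] Z := hZ ▸ stronglyMeasurable_condExp
  have hZ0 : 0 ≤ᵐ[P] Z := hZ ▸ condExp_nonneg (ae_of_all _ fun _ => ENNReal.toReal_nonneg)
  have hdens : Q.trim hm0 = (P.trim hm0).withDensity fun ω => ENNReal.ofReal (Z ω) :=
    hZ ▸ trim_eq_withDensity_condExp_rnDeriv hm0 hQP
  have hQt_eq : Qt = tiltedMeasure P Q Z :=
    Measure.ext fun B hB => by rw [hQt B hB, tiltedMeasure_apply hB, hN]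
  subst hQt_eq hD
  have hQtP : ∀ B, MeasurableSet[m0] B → tiltedMeasure P Q Z B = P B := fun B hB => by
    rw [← trim_measurableSet_eq hm0 hB, trim_tiltedMeasure hm0 hZm.measurable hZ0 hdens,
      trim_measurableSet_eq hm0 hB]
  have : IsProbabilityMeasure (tiltedMeasure P Q Z) :=
    ⟨by rw [hQtP _ MeasurableSet.univ, measure_univ]⟩
  have hQ := withDensity_tiltedMeasure hm0 hZm.measurable hdens
  refine ⟨⟨inferInstance, hQtP⟩, fun C hC => ?_, fun X hX ⟨c, hc⟩ => ?_⟩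
  · simp_rw [ENNReal.ofReal_mul ha.1]
    rw [lintegral_const_mul _ (hZm.measurable.mono hm0 le_rfl).ennreal_ofReal,
      ← withDensity_apply _ hC, hQ]
  · have hXc : ∀ {μ : Measure[mT] Ω}, ∀ᵐ ω ∂μ, ‖X ω‖ ≤ c := ae_of_all _ hc
    rw [integral_eq_integral_mul_condExp_tiltedMeasure hm0 hZm hZ0 hdens
      (.of_bound hX.aestronglyMeasurable c hXc) (.of_bound hX.aestronglyMeasurable c hXc),
      ← integral_const_mul]
    simp_rw [mul_assoc]
end

section
/- In the setting of the decomposition μ = D_t·Q̃ with D_t = a·E_P[dQ/dP | F_t], suppose ρ_t : L^∞(F_T) → L^∞(F_t) is cash-subadditive and regular (ρ_t(X 1_A + Y 1_{A^c}) = 1_A ρ_t(X) + 1_{A^c} ρ_t(Y) for A ∈ F_t), and define ρ_{0,t}(X) = E_P[ρ_t(X)] and the penalty c̄_{0,t}(μ) = sup_{X ∈ L^∞} { E_μ[−X] − ρ_{0,t}(X) }. If P(D_t > 1) > 0, then c̄_{0,t}(μ) = +∞. -/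
/-!
On `A = {D_t > 1} ∈ F_t` the density `D_t` integrates to more than `P(A)`, i.e. `μ(A) > P(A)`.
For the test position `X = -λ 1_A`, regularity splits `ρ_t(X)` into `1_A ρ_t(-λ) + 1_{Aᶜ} ρ_t(0)`
and cash-subadditivity gives `ρ_t(-λ) ≤ λ`, so `E_μ[-X] - ρ_{0,t}(X) ≥ λ (μ(A) - P(A))`,
which is unbounded in `λ`.
-/

open MeasureTheory

lemma abs_indicator_const_neg_le {Ω : Type*} {A : Set Ω} {L : ℝ} (hL : 0 ≤ L) (ω : Ω) :
    |A.indicator (fun _ => -L) ω| ≤ L := by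
  simpa [abs_of_nonneg hL] using norm_indicator_le_norm_self (s := A) (fun _ => -L) ω

section Density

variable {Ω : Type*} {m0 mT : MeasurableSpace Ω} {P Q : @Measure Ω mT}

lemma setIntegral_condExp_toReal_rnDeriv (hm0 : m0 ≤ mT) [IsFiniteMeasure P]
    [IsFiniteMeasure Q] (hQP : Q ≪ P) {A : Set Ω} (hA : MeasurableSet[m0] A) :
    ∫ ω in A, P[fun ω' => (Q.rnDeriv P ω').toReal|m0] ω ∂P = Q.real A := by
  rw [setIntegral_condExp hm0 Measure.integrable_toReal_rnDeriv hA,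
    Measure.setIntegral_toReal_rnDeriv hQP]

lemma measureReal_lt_mul_measureReal_of_one_lt (hm0 : m0 ≤ mT) [IsFiniteMeasure P]
    [IsFiniteMeasure Q] (hQP : Q ≪ P) (a : ℝ) {D : Ω → ℝ}
    (hD : D = fun ω => a * (P[fun ω' => (Q.rnDeriv P ω').toReal|m0]) ω)
    (hpos : 0 < P {ω | 1 < D ω}) :
    P.real {ω | 1 < D ω} < a * Q.real {ω | 1 < D ω} := by
  have hDm : Measurable[m0] D := hD ▸ stronglyMeasurable_condExp.measurable.const_mul a
  have hA : MeasurableSet[m0] {ω | 1 < D ω} := measurableSet_lt measurable_const hDm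
  have hDint : Integrable D P := hD ▸ integrable_condExp.const_mul a
  calc P.real {ω | 1 < D ω} = P.real {ω | 1 < D ω} * 1 := (mul_one _).symm
    _ < ∫ ω in {ω | 1 < D ω}, D ω ∂P := setIntegral_gt_gt zero_le_one hDint.integrableOn hpos.ne'
    _ = a * Q.real {ω | 1 < D ω} := by
      subst hD; rw [integral_const_mul, setIntegral_condExp_toReal_rnDeriv hm0 hQP hA]

end Density

namespace ConditionalRisk

variable {Ω : Type*} {m0 mT : MeasurableSpace Ω}

def CashSubadditive (m0 : MeasurableSpace Ω) (P : @Measure Ω mT)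
    (ρ : (Ω → ℝ) → Ω → ℝ) : Prop :=
  ∀ X : Ω → ℝ, Measurable[mT] X → (∃ C, ∀ ω, |X ω| ≤ C) →
    ∀ m : Ω → ℝ, Measurable[m0] m → (∃ C, ∀ ω, |m ω| ≤ C) → (∀ ω, 0 ≤ m ω) →
    ∀ᵐ ω ∂P, ρ X ω - m ω ≤ ρ (fun ω' => X ω' + m ω') ω

def IsRegular (m0 : MeasurableSpace Ω) (P : @Measure Ω mT) (ρ : (Ω → ℝ) → Ω → ℝ) : Prop :=
  ∀ X Y : Ω → ℝ, Measurable[mT] X → Measurable[mT] Y →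
    (∃ C, ∀ ω, |X ω| ≤ C) → (∃ C, ∀ ω, |Y ω| ≤ C) →
    ∀ A : Set Ω, MeasurableSet[m0] A →
    ∀ᵐ ω ∂P, ρ (fun ω' => A.indicator X ω' + Aᶜ.indicator Y ω') ω =
      A.indicator (ρ X) ω + Aᶜ.indicator (ρ Y) ω

variable {P Q : @Measure Ω mT} {ρ : (Ω → ℝ) → Ω → ℝ}

lemma CashSubadditive.ae_le_neg_const (hcsa : CashSubadditive m0 P ρ)
    (hnorm : ∀ᵐ ω ∂P, ρ 0 ω = 0) {L : ℝ} (hL : 0 ≤ L) :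
    ∀ᵐ ω ∂P, ρ (fun _ => -L) ω ≤ L := by
  have hbdd : ∀ c : ℝ, |c| ≤ L → ∃ C, ∀ _ : Ω, |c| ≤ C := fun c hc => ⟨L, fun _ => hc⟩
  filter_upwards [hcsa (fun _ => -L) measurable_const (hbdd _ (by simp [abs_of_nonneg hL]))
    (fun _ => L) measurable_const (hbdd _ (abs_of_nonneg hL).le) (fun _ => hL), hnorm]
    with ω hcash hzero
  have hcancel : (fun _ : Ω => -L + L) = 0 := funext fun _ => neg_add_cancel L
  rw [hcancel, hzero] at hcash
  linarith

lemma IsRegular.ae_eq_indicator (hreg : IsRegular m0 P ρ) {X : Ω → ℝ} (hX : Measurable[mT] X)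
    (hXb : ∃ C, ∀ ω, |X ω| ≤ C) {A : Set Ω} (hA : MeasurableSet[m0] A) :
    ∀ᵐ ω ∂P, ρ (A.indicator X) ω = A.indicator (ρ X) ω + Aᶜ.indicator (ρ 0) ω := by
  simpa using hreg X 0 hX measurable_const hXb ⟨0, fun _ => by simp⟩ A hA

lemma ae_le_indicator_of_cashSubadditive_of_isRegular (hcsa : CashSubadditive m0 P ρ)
    (hreg : IsRegular m0 P ρ) (hnorm : ∀ᵐ ω ∂P, ρ 0 ω = 0) {A : Set Ω}
    (hA : MeasurableSet[m0] A) {L : ℝ} (hL : 0 ≤ L) :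
    ∀ᵐ ω ∂P, ρ (A.indicator fun _ => -L) ω ≤ A.indicator (fun _ => L) ω := by
  filter_upwards [hreg.ae_eq_indicator (X := fun _ => -L) measurable_const
      ⟨L, fun _ => by simp [abs_of_nonneg hL]⟩ hA,
    hcsa.ae_le_neg_const hnorm hL, hnorm] with ω hsplit hconst hzero
  rw [hsplit]
  by_cases hω : ω ∈ A <;> simp [hω, hconst, hzero]

lemma mul_sub_le_penalty_indicator (hm0 : m0 ≤ mT) [IsFiniteMeasure P] [IsFiniteMeasure Q]
    (hmeas : ∀ X : Ω → ℝ, Measurable[mT] X → (∃ C, ∀ ω, |X ω| ≤ C) →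
      Measurable[m0] (ρ X) ∧ ∃ C, ∀ ω, |ρ X ω| ≤ C)
    (hcsa : CashSubadditive m0 P ρ) (hreg : IsRegular m0 P ρ) (hnorm : ∀ᵐ ω ∂P, ρ 0 ω = 0)
    (a : ℝ) {A : Set Ω} (hA : MeasurableSet[m0] A) {L : ℝ} (hL : 0 ≤ L) :
    L * (a * Q.real A - P.real A) ≤
      a * ∫ ω, -(A.indicator (fun _ => -L) ω) ∂Q - ∫ ω, ρ (A.indicator fun _ => -L) ω ∂P := by
  have hAT : MeasurableSet[mT] A := hm0 _ hA
  obtain ⟨hρm, C, hC⟩ := hmeas _ (measurable_const.indicator hAT)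
    ⟨L, abs_indicator_const_neg_le hL⟩
  have hρint : Integrable (ρ (A.indicator fun _ => -L)) P :=
    .of_bound (hρm.mono hm0 le_rfl).aestronglyMeasurable C (.of_forall hC)
  have hQ : ∫ ω, -(A.indicator (fun _ => -L) ω) ∂Q = Q.real A * L := by
    have hneg : (fun ω => -(A.indicator (fun _ => -L) ω)) = A.indicator fun _ => L := by
      ext ω; by_cases hω : ω ∈ A <;> simp [hω]
    rw [hneg]
    exact integral_indicator_const L hAT
  have hP : ∫ ω, ρ (A.indicator fun _ => -L) ω ∂P ≤ P.real A * L := by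
    rw [← smul_eq_mul, ← integral_indicator_const L hAT]
    exact integral_mono_ae hρint ((integrable_const L).indicator hAT)
      (ae_le_indicator_of_cashSubadditive_of_isRegular hcsa hreg hnorm hA hL)
  rw [hQ]
  nlinarith

end ConditionalRisk

theorem stmt8_general {Ω : Type*} {m0 mT : MeasurableSpace Ω} (hm0 : m0 ≤ mT)
    (P Q : @Measure Ω mT) [IsProbabilityMeasure P] [IsProbabilityMeasure Q]
    (hQP : Q ≪ P)
    (a : ℝ)
    (D : Ω → ℝ) (hD : D = fun ω => a * (P[fun ω' => (Q.rnDeriv P ω').toReal|m0]) ω)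
    (ρt : (Ω → ℝ) → Ω → ℝ)
    -- ρ_t maps L^∞(F_T) into L^∞(F_t)
    (hmeas : ∀ X : Ω → ℝ, Measurable[mT] X → (∃ C, ∀ ω, |X ω| ≤ C) →
      Measurable[m0] (ρt X) ∧ ∃ C, ∀ ω, |ρt X ω| ≤ C)
    -- normalization
    (hnorm : ∀ᵐ ω ∂P, ρt 0 ω = 0)
    -- conditional cash-subadditivity
    (hcsa : ∀ X : Ω → ℝ, Measurable[mT] X → (∃ C, ∀ ω, |X ω| ≤ C) →
      ∀ m : Ω → ℝ, Measurable[m0] m → (∃ C, ∀ ω, |m ω| ≤ C) → (∀ ω, 0 ≤ m ω) →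
      ∀ᵐ ω ∂P, ρt X ω - m ω ≤ ρt (fun ω' => X ω' + m ω') ω)
    -- regularity
    (hreg : ∀ X Y : Ω → ℝ, Measurable[mT] X → Measurable[mT] Y →
      (∃ C, ∀ ω, |X ω| ≤ C) → (∃ C, ∀ ω, |Y ω| ≤ C) →
      ∀ A : Set Ω, MeasurableSet[m0] A →
      ∀ᵐ ω ∂P, ρt (fun ω' => A.indicator X ω' + Aᶜ.indicator Y ω') ω =
        A.indicator (ρt X) ω + Aᶜ.indicator (ρt Y) ω)
    (hDgt : 0 < P {ω | 1 < D ω}) :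
    (⨆ X : {X : Ω → ℝ // Measurable[mT] X ∧ ∃ C, ∀ ω, |X ω| ≤ C},
      ((a * ∫ ω, -(X.1 ω) ∂Q - ∫ ω, ρt X.1 ω ∂P : ℝ) : EReal)) = ⊤ := by
  set A := {ω | 1 < D ω}
  have hA : MeasurableSet[m0] A :=
    measurableSet_lt measurable_const (hD ▸ stronglyMeasurable_condExp.measurable.const_mul a)
  have hδ : 0 < a * Q.real A - P.real A :=
    sub_pos.2 (measureReal_lt_mul_measureReal_of_one_lt hm0 hQP a hD hDgt)
  rw [EReal.eq_top_iff_forall_lt]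
  intro M
  set L := (|M| + 1) / (a * Q.real A - P.real A)
  have hL : 0 ≤ L := by positivity
  have hML : M < L * (a * Q.real A - P.real A) := by
    rw [div_mul_cancel₀ _ hδ.ne']
    linarith [le_abs_self M]
  refine (EReal.coe_lt_coe_iff.2 (hML.trans_le
    (ConditionalRisk.mul_sub_le_penalty_indicator hm0 hmeas hcsa hreg hnorm a hA hL))).trans_le ?_
  exact le_iSup_of_le
    ⟨_, measurable_const.indicator (hm0 _ hA), L, abs_indicator_const_neg_le hL⟩
    le_rfl

/-- In the decomposition `μ = D_t·Q̃` with `D_t = a·E_P[dQ/dP|F_t]`: if `ρ_t` is a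
cash-subadditive, normalized, regular conditional risk measure,
`ρ_{0,t}(X) = E_P[ρ_t(X)]` and
`c̄_{0,t}(μ) = sup_{X ∈ L^∞} { E_μ[−X] − ρ_{0,t}(X) }` with `μ = a·Q`,
then `P(D_t > 1) > 0` implies `c̄_{0,t}(μ) = +∞`. -/
theorem stmt8 {Ω : Type*} {m0 mT : MeasurableSpace Ω} (hm0 : m0 ≤ mT)
    (P Q : @Measure Ω mT) [IsProbabilityMeasure P] [IsProbabilityMeasure Q]
    (hQP : Q ≪ P)
    (a : ℝ) (ha : a ∈ Set.Icc (0:ℝ) 1)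
    (D : Ω → ℝ) (hD : D = fun ω => a * (P[fun ω' => (Q.rnDeriv P ω').toReal|m0]) ω)
    (ρt : (Ω → ℝ) → Ω → ℝ)
    -- ρ_t maps L^∞(F_T) into L^∞(F_t)
    (hmeas : ∀ X : Ω → ℝ, Measurable[mT] X → (∃ C, ∀ ω, |X ω| ≤ C) →
      Measurable[m0] (ρt X) ∧ ∃ C, ∀ ω, |ρt X ω| ≤ C)
    -- normalization
    (hnorm : ∀ᵐ ω ∂P, ρt 0 ω = 0)
    -- conditional cash-subadditivity
    (hcsa : ∀ X : Ω → ℝ, Measurable[mT] X → (∃ C, ∀ ω, |X ω| ≤ C) →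
      ∀ m : Ω → ℝ, Measurable[m0] m → (∃ C, ∀ ω, |m ω| ≤ C) → (∀ ω, 0 ≤ m ω) →
      ∀ᵐ ω ∂P, ρt X ω - m ω ≤ ρt (fun ω' => X ω' + m ω') ω)
    -- regularity
    (hreg : ∀ X Y : Ω → ℝ, Measurable[mT] X → Measurable[mT] Y →
      (∃ C, ∀ ω, |X ω| ≤ C) → (∃ C, ∀ ω, |Y ω| ≤ C) →
      ∀ A : Set Ω, MeasurableSet[m0] A →
      ∀ᵐ ω ∂P, ρt (fun ω' => A.indicator X ω' + Aᶜ.indicator Y ω') ω =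
        A.indicator (ρt X) ω + Aᶜ.indicator (ρt Y) ω)
    (hDgt : 0 < P {ω | 1 < D ω}) :
    (⨆ X : {X : Ω → ℝ // Measurable[mT] X ∧ ∃ C, ∀ ω, |X ω| ≤ C},
      ((a * ∫ ω, -(X.1 ω) ∂Q - ∫ ω, ρt X.1 ω ∂P : ℝ) : EReal)) = ⊤ :=
  stmt8_general hm0 P Q hQP a D hD ρt hmeas hnorm hcsa hreg hDgt
end

section
/- Let ρ_t : L^∞(F_T) → L^∞(F_t) be regular. Fix D ∈ D (an adapted [0,1]-valued process) and Q ∈ Q_t (a probability measure with Q ≪ P and Q = P on F_t). Define the conditional minimal penalty c̄_t(DQ) = ess sup_{X ∈ L^∞} { D_t E_Q[−X|F_t] − ρ_t(X) } and the static penalty c̄_{0,t}(DQ) = sup_{X ∈ L^∞} { E_P[D_t E_Q[−X|F_t]] − E_P[ρ_t(X)] }. Then E_P[c̄_t(DQ)] = c̄_{0,t}(DQ). -/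
/-!
By regularity of `ρ_t`, gluing `X` and `Y` along the `F_t`-set where
`D_t E_Q[-X|F_t] - ρ_t(X)` dominates `D_t E_Q[-Y|F_t] - ρ_t(Y)` produces the pointwise maximum of
the two, so the family is a.e. upward directed. Then the partial maxima of any sequence in the
family are dominated by members, and monotone convergence bounds the integral of the supremum of
the sequence by the supremum `S` of the integrals. A sequence whose integrals approach `S` thus has
a supremum `G` with `∫ G = S`; if `S < ∞`, adjoining any member to the sequence leaves this
integral unchanged, so `G` is an a.e. upper bound of the family and dominates the essential
supremum. On the static side, the member for `X = 0` vanishes since `ρ_t(0) = 0`, so by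
directedness every member is dominated by a nonnegative one and taking positive parts changes
nothing.
-/

open MeasureTheory Filter
open scoped ENNReal

theorem exists_seq_iSup_comp_eq_iSup {α ι : Type*} [CompleteLinearOrder α] [TopologicalSpace α]
    [OrderTopology α] [FirstCountableTopology α] [Nonempty ι] (a : ι → α) :
    ∃ u : ℕ → ι, ⨆ n, a (u n) = ⨆ i, a i := by
  obtain ⟨s, -, hs_lim, hs_mem⟩ :=
    exists_seq_tendsto_sSup (Set.range_nonempty a) (OrderTop.bddAbove _)
  choose u hu using hs_mem
  refine ⟨u, le_antisymm (iSup_comp_le a u) (le_of_tendsto' hs_lim fun n => ?_)⟩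
  rw [← hu n]
  exact le_iSup (fun n => a (u n)) n

section
variable {Ω ι : Type*} [MeasurableSpace Ω] {μ : Measure Ω} {f : ι → Ω → ℝ≥0∞}

theorem exists_partialSups_comp_ae_le (hdir : Directed (· ≤ᵐ[μ] ·) f) (u : ℕ → ι) (N : ℕ) :
    ∃ k, partialSups (f ∘ u) N ≤ᵐ[μ] f k := by
  induction N with
  | zero => exact ⟨u 0, by rw [partialSups_zero]; exact EventuallyLE.rfl⟩
  | succ N ih =>
    obtain ⟨k, hk⟩ := ih
    obtain ⟨k', hkk', huk'⟩ := hdir k (u (N + 1))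
    refine ⟨k', ?_⟩
    rw [← Order.succ_eq_add_one, partialSups_succ]
    filter_upwards [hk, hkk', huk'] with ω h₁ h₂ h₃
    exact sup_le (h₁.trans h₂) h₃

theorem lintegral_iSup_comp_le_iSup_lintegral (hf : ∀ i, Measurable (f i))
    (hdir : Directed (· ≤ᵐ[μ] ·) f) (u : ℕ → ι) :
    ∫⁻ ω, ⨆ n, f (u n) ω ∂μ ≤ ⨆ i, ∫⁻ ω, f i ω ∂μ := by
  have hsup : ∀ ω, ⨆ n, f (u n) ω = ⨆ N, partialSups (f ∘ u) N ω := fun ω => by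
    simp only [← iSup_apply, iSup_partialSups_eq]
    rfl
  have hmeas : ∀ N, Measurable (partialSups (f ∘ u) N) := fun N => by
    rw [partialSups_eq_sup'_range]
    exact Finset.measurable_sup' _ fun n _ => hf (u n)
  simp_rw [hsup, lintegral_iSup hmeas (partialSups_monotone _)]
  refine iSup_le fun N => ?_
  obtain ⟨k, hk⟩ := exists_partialSups_comp_ae_le hdir u N
  exact (lintegral_mono_ae hk).trans (le_iSup (fun i => ∫⁻ ω, f i ω ∂μ) k)

theorem lintegral_eq_iSup_lintegral_of_directed [Nonempty ι] (hf : ∀ i, Measurable (f i))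
    (hdir : Directed (· ≤ᵐ[μ] ·) f) {g : Ω → ℝ≥0∞} (hub : ∀ i, f i ≤ᵐ[μ] g)
    (hlub : ∀ h : Ω → ℝ≥0∞, (∀ i, f i ≤ᵐ[μ] h) → g ≤ᵐ[μ] h) :
    ∫⁻ ω, g ω ∂μ = ⨆ i, ∫⁻ ω, f i ω ∂μ := by
  refine le_antisymm ?_ (iSup_le fun i => lintegral_mono_ae (hub i))
  rcases eq_or_ne (⨆ i, ∫⁻ ω, f i ω ∂μ) ⊤ with hS | hS
  · exact hS ▸ le_top
  obtain ⟨u, hu⟩ := exists_seq_iSup_comp_eq_iSup fun i => ∫⁻ ω, f i ω ∂μ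
  have hG : ∫⁻ ω, ⨆ n, f (u n) ω ∂μ = ⨆ i, ∫⁻ ω, f i ω ∂μ := by
    refine le_antisymm (lintegral_iSup_comp_le_iSup_lintegral hf hdir u) ?_
    rw [← hu]
    exact iSup_le fun n => lintegral_mono fun ω => le_iSup (fun n => f (u n) ω) n
  have hGub : ∀ i, f i ≤ᵐ[μ] fun ω => ⨆ n, f (u n) ω := fun i => by
    let v : ℕ → ι := fun n => Nat.casesOn n i u
    have hv : ∀ ω, ⨆ n, f (v n) ω = f i ω ⊔ ⨆ n, f (u n) ω := fun ω =>
      (sup_iSup_nat_succ fun n => f (v n) ω).symm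
    have hae : (fun ω => ⨆ n, f (u n) ω) =ᵐ[μ] fun ω => ⨆ n, f (v n) ω := by
      refine ae_eq_of_ae_le_of_lintegral_le (ae_of_all _ fun ω => le_sup_right.trans_eq (hv ω).symm)
        (hG ▸ hS) (Measurable.aemeasurable <| .iSup fun n => hf (v n)) ?_
      rw [hG]
      exact lintegral_iSup_comp_le_iSup_lintegral hf hdir v
    filter_upwards [hae] with ω hω
    exact le_sup_left.trans_eq ((hv ω).symm.trans hω.symm)
  exact hG ▸ lintegral_mono_ae (hlub _ hGub)
end

section
variable {Ω ι : Type*} [MeasurableSpace Ω] {μ : Measure Ω}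

theorem ofReal_integral_le_lintegral_ofReal {f : Ω → ℝ} (hf : Integrable f μ) :
    ENNReal.ofReal (∫ ω, f ω ∂μ) ≤ ∫⁻ ω, ENNReal.ofReal (f ω) ∂μ := by
  rw [integral_eq_lintegral_pos_part_sub_lintegral_neg_part hf]
  exact (ENNReal.ofReal_le_ofReal (sub_le_self _ ENNReal.toReal_nonneg)).trans
    ENNReal.ofReal_toReal_le

theorem iSup_lintegral_ofReal_eq_iSup_ofReal_integral {h : ι → Ω → ℝ}
    (hint : ∀ i, Integrable (h i) μ) (hdir : Directed (· ≤ᵐ[μ] ·) h) {i₀ : ι}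
    (hi₀ : 0 ≤ᵐ[μ] h i₀) :
    ⨆ i, ∫⁻ ω, ENNReal.ofReal (h i ω) ∂μ = ⨆ i, ENNReal.ofReal (∫ ω, h i ω ∂μ) := by
  refine le_antisymm (iSup_le fun i => ?_)
    (iSup_mono fun i => ofReal_integral_le_lintegral_ofReal (hint i))
  obtain ⟨j, hij, hi₀j⟩ := hdir i i₀
  calc ∫⁻ ω, ENNReal.ofReal (h i ω) ∂μ ≤ ∫⁻ ω, ENNReal.ofReal (h j ω) ∂μ :=
        lintegral_mono_ae (hij.mono fun ω hω => ENNReal.ofReal_le_ofReal hω)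
    _ = ENNReal.ofReal (∫ ω, h j ω ∂μ) :=
        (ofReal_integral_eq_lintegral_ofReal (hint j) (hi₀.trans hi₀j)).symm
    _ ≤ ⨆ i, ENNReal.ofReal (∫ ω, h i ω ∂μ) :=
        le_iSup (fun i => ENNReal.ofReal (∫ ω, h i ω ∂μ)) j

theorem integrable_of_abs_le [IsFiniteMeasure μ] {f : Ω → ℝ} (hf : Measurable f)
    (hb : ∃ C, ∀ ω, |f ω| ≤ C) : Integrable f μ :=
  let ⟨C, hC⟩ := hb
  .of_bound hf.aestronglyMeasurable C (ae_of_all _ hC)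

end

section
variable {Ω : Type*} {m0 mT : MeasurableSpace Ω} {P Q : Measure[mT] Ω}

theorem MeasureTheory.Integrable.of_trim_eq_trim {E : Type*} [NormedAddCommGroup E]
    (hm0 : m0 ≤ mT) (hPQ : Q.trim hm0 = P.trim hm0) {f : Ω → E} (hf : StronglyMeasurable[m0] f)
    (hfQ : Integrable f Q) : Integrable f P :=
  integrable_of_integrable_trim hm0 (hPQ ▸ hfQ.trim hm0 hf)

theorem Filter.EventuallyEq.of_trim_eq_trim {E : Type*} [TopologicalSpace E]
    [TopologicalSpace.MetrizableSpace E] (hm0 : m0 ≤ mT) (hPQ : Q.trim hm0 = P.trim hm0)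
    {f g : Ω → E} (hf : StronglyMeasurable[m0] f) (hg : StronglyMeasurable[m0] g)
    (hfg : f =ᵐ[Q] g) : f =ᵐ[P] g :=
  ae_eq_of_ae_eq_trim (hPQ ▸ hf.ae_eq_trim_of_stronglyMeasurable hm0 hg hfg)

theorem condExp_indicator_add_indicator_compl (hm0 : m0 ≤ mT) {f g : Ω → ℝ}
    (hf : Integrable f Q) (hg : Integrable g Q) {A : Set Ω} (hA : MeasurableSet[m0] A) :
    Q[A.indicator f + Aᶜ.indicator g|m0] =ᵐ[Q] A.indicator (Q[f|m0]) + Aᶜ.indicator (Q[g|m0]) :=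
  (condExp_add (hf.indicator (hm0 _ hA)) (hg.indicator (hm0 _ hA.compl)) m0).trans
    ((condExp_indicator hf hA).add (condExp_indicator hg hA.compl))

theorem integrable_mul_condExp_of_trim_eq_trim (hm0 : m0 ≤ mT)
    (hPQ : Q.trim hm0 = P.trim hm0) {D : Ω → ℝ} (hDmeas : Measurable[m0] D) {c : ℝ}
    (hD : ∀ ω, |D ω| ≤ c) (f : Ω → ℝ) :
    Integrable (fun ω => D ω * (Q[f|m0]) ω) P :=
  (integrable_condExp.of_trim_eq_trim hm0 hPQ stronglyMeasurable_condExp).bdd_mul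
    (hDmeas.mono hm0 le_rfl).aestronglyMeasurable (ae_of_all _ hD)

end

theorem Set.indicator_setOf_le_add_indicator_compl {α β : Type*} [LinearOrder β]
    [AddZeroClass β] (f g : α → β) :
    {a | g a ≤ f a}.indicator f + {a | g a ≤ f a}ᶜ.indicator g = f ⊔ g := by
  ext a
  by_cases h : g a ≤ f a
  · simp [h]
  · simp [h, (not_le.mp h).le]

theorem exists_abs_indicator_add_indicator_compl_le {α : Type*} {X Y : α → ℝ}
    (hX : ∃ C, ∀ a, |X a| ≤ C) (hY : ∃ C, ∀ a, |Y a| ≤ C) (A : Set α) :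
    ∃ C, ∀ a, |A.indicator X a + Aᶜ.indicator Y a| ≤ C := by
  obtain ⟨CX, hCX⟩ := hX
  obtain ⟨CY, hCY⟩ := hY
  refine ⟨max CX CY, fun a => ?_⟩
  by_cases ha : a ∈ A
  · simpa [ha] using (hCX a).trans (le_max_left CX CY)
  · simpa [ha] using (hCY a).trans (le_max_right CX CY)

section Penalty
variable {Ω : Type*} {m0 mT : MeasurableSpace Ω} {P Q : Measure[mT] Ω} {D : Ω → ℝ}
  {ρt : (Ω → ℝ) → Ω → ℝ}

variable (m0 Q D ρt) in
noncomputable def penaltyIntegrand (X : Ω → ℝ) : Ω → ℝ :=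
  fun ω => D ω * (Q[fun ω' => -X ω'|m0]) ω - ρt X ω

theorem measurable_penaltyIntegrand (hDmeas : Measurable[m0] D) {X : Ω → ℝ}
    (hρX : Measurable[m0] (ρt X)) : Measurable[m0] (penaltyIntegrand m0 Q D ρt X) :=
  (hDmeas.mul stronglyMeasurable_condExp.measurable).sub hρX

theorem penaltyIntegrand_indicator_add_indicator_compl (hm0 : m0 ≤ mT)
    (hPQ : Q.trim hm0 = P.trim hm0) {X Y : Ω → ℝ} (hX : Integrable X Q) (hY : Integrable Y Q)
    {A : Set Ω} (hA : MeasurableSet[m0] A)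
    (hρ : ∀ᵐ ω ∂P, ρt (fun ω' => A.indicator X ω' + Aᶜ.indicator Y ω') ω =
      A.indicator (ρt X) ω + Aᶜ.indicator (ρt Y) ω) :
    penaltyIntegrand m0 Q D ρt (fun ω' => A.indicator X ω' + Aᶜ.indicator Y ω') =ᵐ[P]
      A.indicator (penaltyIntegrand m0 Q D ρt X) +
        Aᶜ.indicator (penaltyIntegrand m0 Q D ρt Y) := by
  have hneg : (fun ω' => -(A.indicator X ω' + Aᶜ.indicator Y ω')) =
      A.indicator (fun ω => -X ω) + Aᶜ.indicator (fun ω => -Y ω) := by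
    ext ω
    by_cases hω : ω ∈ A <;> simp [hω]
  have hcond : Q[fun ω' => -(A.indicator X ω' + Aᶜ.indicator Y ω')|m0] =ᵐ[P]
      A.indicator (Q[fun ω => -X ω|m0]) + Aᶜ.indicator (Q[fun ω => -Y ω|m0]) := by
    rw [hneg]
    exact .of_trim_eq_trim hm0 hPQ stronglyMeasurable_condExp
      ((stronglyMeasurable_condExp.indicator hA).add
        (stronglyMeasurable_condExp.indicator hA.compl))
      (condExp_indicator_add_indicator_compl hm0 hX.neg hY.neg hA)
  filter_upwards [hcond, hρ] with ω hcω hρω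
  simp only [penaltyIntegrand]
  rw [hcω, hρω]
  by_cases hω : ω ∈ A <;> simp [penaltyIntegrand, hω]

theorem directed_penaltyIntegrand [IsFiniteMeasure Q] (hm0 : m0 ≤ mT)
    (hPQ : Q.trim hm0 = P.trim hm0) (hDmeas : Measurable[m0] D)
    (hρmeas : ∀ X : Ω → ℝ, Measurable[mT] X → (∃ C, ∀ ω, |X ω| ≤ C) → Measurable[m0] (ρt X))
    (hreg : ∀ X Y : Ω → ℝ, Measurable[mT] X → Measurable[mT] Y →
      (∃ C, ∀ ω, |X ω| ≤ C) → (∃ C, ∀ ω, |Y ω| ≤ C) →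
      ∀ A : Set Ω, MeasurableSet[m0] A →
      ∀ᵐ ω ∂P, ρt (fun ω' => A.indicator X ω' + Aᶜ.indicator Y ω') ω =
        A.indicator (ρt X) ω + Aᶜ.indicator (ρt Y) ω) :
    Directed (· ≤ᵐ[P] ·) fun X : {X : Ω → ℝ // Measurable[mT] X ∧ ∃ C, ∀ ω, |X ω| ≤ C} =>
      penaltyIntegrand m0 Q D ρt X.1 := by
  rintro ⟨X, hXm, hXb⟩ ⟨Y, hYm, hYb⟩
  set A := {ω | penaltyIntegrand m0 Q D ρt Y ω ≤ penaltyIntegrand m0 Q D ρt X ω}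
  have hA : MeasurableSet[m0] A := measurableSet_le
    (measurable_penaltyIntegrand hDmeas (hρmeas Y hYm hYb))
    (measurable_penaltyIntegrand hDmeas (hρmeas X hXm hXb))
  have hmax : penaltyIntegrand m0 Q D ρt (fun ω => A.indicator X ω + Aᶜ.indicator Y ω) =ᵐ[P]
      penaltyIntegrand m0 Q D ρt X ⊔ penaltyIntegrand m0 Q D ρt Y :=
    (penaltyIntegrand_indicator_add_indicator_compl hm0 hPQ (integrable_of_abs_le hXm hXb)
      (integrable_of_abs_le hYm hYb) hA (hreg X Y hXm hYm hXb hYb A hA)).trans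
      (Set.indicator_setOf_le_add_indicator_compl _ _).eventuallyEq
  refine ⟨⟨fun ω => A.indicator X ω + Aᶜ.indicator Y ω,
    (hXm.indicator (hm0 _ hA)).add (hYm.indicator (hm0 _ hA.compl)),
    exists_abs_indicator_add_indicator_compl_le hXb hYb A⟩,
    hmax.mono fun ω h => le_sup_left.trans_eq h.symm,
    hmax.mono fun ω h => le_sup_right.trans_eq h.symm⟩

end Penalty

theorem stmt10_general {Ω : Type*} {m0 mT : MeasurableSpace Ω} (hm0 : m0 ≤ mT)
    (P Q : @Measure Ω mT) [IsProbabilityMeasure P] [IsProbabilityMeasure Q]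
    (hQt : ∀ B : Set Ω, MeasurableSet[m0] B → Q B = P B)
    (D : Ω → ℝ) (hDmeas : Measurable[m0] D) (hDval : ∀ ω, D ω ∈ Set.Icc (0:ℝ) 1)
    (ρt : (Ω → ℝ) → Ω → ℝ)
    (hmeas : ∀ X : Ω → ℝ, Measurable[mT] X → (∃ C, ∀ ω, |X ω| ≤ C) →
      Measurable[m0] (ρt X) ∧ ∃ C, ∀ ω, |ρt X ω| ≤ C)
    (hnorm : ∀ᵐ ω ∂P, ρt 0 ω = 0)
    (hreg : ∀ X Y : Ω → ℝ, Measurable[mT] X → Measurable[mT] Y →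
      (∃ C, ∀ ω, |X ω| ≤ C) → (∃ C, ∀ ω, |Y ω| ≤ C) →
      ∀ A : Set Ω, MeasurableSet[m0] A →
      ∀ᵐ ω ∂P, ρt (fun ω' => A.indicator X ω' + Aᶜ.indicator Y ω') ω =
        A.indicator (ρt X) ω + Aᶜ.indicator (ρt Y) ω)
    (ct : Ω → ℝ≥0∞)
    -- `ct` is an a.e. upper bound of the family ...
    (hub : ∀ X : Ω → ℝ, Measurable[mT] X → (∃ C, ∀ ω, |X ω| ≤ C) →
      ∀ᵐ ω ∂P, ENNReal.ofReal (D ω * (Q[fun ω' => -X ω'|m0]) ω - ρt X ω) ≤ ct ω)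
    -- ... and a.e. below any other upper bound (i.e. an essential supremum)
    (hlub : ∀ g : Ω → ℝ≥0∞,
      (∀ X : Ω → ℝ, Measurable[mT] X → (∃ C, ∀ ω, |X ω| ≤ C) →
        ∀ᵐ ω ∂P, ENNReal.ofReal (D ω * (Q[fun ω' => -X ω'|m0]) ω - ρt X ω) ≤ g ω) →
      ∀ᵐ ω ∂P, ct ω ≤ g ω) :
    ∫⁻ ω, ct ω ∂P =
      ⨆ X : {X : Ω → ℝ // Measurable[mT] X ∧ ∃ C, ∀ ω, |X ω| ≤ C},
        ENNReal.ofReal (∫ ω, D ω * (Q[fun ω' => -(X.1 ω')|m0]) ω ∂P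
          - ∫ ω, ρt X.1 ω ∂P) := by
  have hPQ : Q.trim hm0 = P.trim hm0 := @Measure.ext Ω m0 _ _ fun B hB => by
    rw [trim_measurableSet_eq hm0 hB, trim_measurableSet_eq hm0 hB, hQt B hB]
  have hD : ∀ ω, |D ω| ≤ 1 := fun ω => abs_le.mpr ⟨by linarith [(hDval ω).1], (hDval ω).2⟩
  let H := fun X : {X : Ω → ℝ // Measurable[mT] X ∧ ∃ C, ∀ ω, |X ω| ≤ C} =>
    penaltyIntegrand m0 Q D ρt X.1
  have hHmeas : ∀ X, Measurable[mT] (H X) := fun X =>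
    (measurable_penaltyIntegrand hDmeas (hmeas X.1 X.2.1 X.2.2).1).mono hm0 le_rfl
  have hρint : ∀ X : {X : Ω → ℝ // Measurable[mT] X ∧ ∃ C, ∀ ω, |X ω| ≤ C},
      Integrable (ρt X.1) P := fun X =>
    integrable_of_abs_le ((hmeas X.1 X.2.1 X.2.2).1.mono hm0 le_rfl) (hmeas X.1 X.2.1 X.2.2).2
  have hHint : ∀ X, Integrable (H X) P := fun X =>
    (integrable_mul_condExp_of_trim_eq_trim hm0 hPQ hDmeas hD _).sub (hρint X)
  have hdir : Directed (· ≤ᵐ[P] ·) H :=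
    directed_penaltyIntegrand hm0 hPQ hDmeas (fun X hXm hXb => (hmeas X hXm hXb).1) hreg
  let X₀ : {X : Ω → ℝ // Measurable[mT] X ∧ ∃ C, ∀ ω, |X ω| ≤ C} :=
    ⟨0, measurable_const, 0, by simp⟩
  have hX₀ : 0 ≤ᵐ[P] H X₀ := by
    filter_upwards [hnorm] with ω hω
    simp [H, X₀, penaltyIntegrand, hω]
  have : Nonempty {X : Ω → ℝ // Measurable[mT] X ∧ ∃ C, ∀ ω, |X ω| ≤ C} := ⟨X₀⟩
  rw [lintegral_eq_iSup_lintegral_of_directed (f := fun X ω => ENNReal.ofReal (H X ω))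
      (fun X => ENNReal.measurable_ofReal.comp (hHmeas X))
      (hdir.mono_comp _ (rb := (· ≤ᵐ[P] ·)) (g := fun φ ω => ENNReal.ofReal (φ ω))
        fun _ _ h => h.mono fun _ => ENNReal.ofReal_le_ofReal)
      (fun X => hub X.1 X.2.1 X.2.2) (fun g hg => hlub g fun X hXm hXb => hg ⟨X, hXm, hXb⟩),
    iSup_lintegral_ofReal_eq_iSup_ofReal_integral hHint hdir hX₀]
  exact iSup_congr fun X => by
    rw [← integral_sub (integrable_mul_condExp_of_trim_eq_trim hm0 hPQ hDmeas hD _) (hρint X)]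
    rfl

/-- For a regular, normalized conditional risk measure `ρ_t`, `D ∈ 𝒟` and
`Q ∈ 𝒬_t`, the expectation under `P` of the conditional minimal penalty
`c̄_t(DQ) = ess sup_{X ∈ L^∞} { D_t E_Q[−X|F_t] − ρ_t(X) }` equals the static
minimal penalty `c̄_{0,t}(DQ) = sup_{X ∈ L^∞} { E_P[D_t E_Q[−X|F_t]] − E_P[ρ_t(X)] }`.
Here `c̄_t(DQ)` (which is nonnegative, since `ρ_t` is normalized) is
characterized as the `[0,∞]`-valued a.e.-least upper bound of the family, and
both penalties take values in `[0,∞]`. -/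
theorem stmt10 {Ω : Type*} {m0 mT : MeasurableSpace Ω} (hm0 : m0 ≤ mT)
    (P Q : @Measure Ω mT) [IsProbabilityMeasure P] [IsProbabilityMeasure Q]
    (hQP : Q ≪ P) (hQt : ∀ B : Set Ω, MeasurableSet[m0] B → Q B = P B)
    (D : Ω → ℝ) (hDmeas : Measurable[m0] D) (hDval : ∀ ω, D ω ∈ Set.Icc (0:ℝ) 1)
    (ρt : (Ω → ℝ) → Ω → ℝ)
    (hmeas : ∀ X : Ω → ℝ, Measurable[mT] X → (∃ C, ∀ ω, |X ω| ≤ C) →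
      Measurable[m0] (ρt X) ∧ ∃ C, ∀ ω, |ρt X ω| ≤ C)
    (hnorm : ∀ᵐ ω ∂P, ρt 0 ω = 0)
    (hreg : ∀ X Y : Ω → ℝ, Measurable[mT] X → Measurable[mT] Y →
      (∃ C, ∀ ω, |X ω| ≤ C) → (∃ C, ∀ ω, |Y ω| ≤ C) →
      ∀ A : Set Ω, MeasurableSet[m0] A →
      ∀ᵐ ω ∂P, ρt (fun ω' => A.indicator X ω' + Aᶜ.indicator Y ω') ω =
        A.indicator (ρt X) ω + Aᶜ.indicator (ρt Y) ω)
    (ct : Ω → ℝ≥0∞)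
    -- `ct` is an a.e. upper bound of the family ...
    (hub : ∀ X : Ω → ℝ, Measurable[mT] X → (∃ C, ∀ ω, |X ω| ≤ C) →
      ∀ᵐ ω ∂P, ENNReal.ofReal (D ω * (Q[fun ω' => -X ω'|m0]) ω - ρt X ω) ≤ ct ω)
    -- ... and a.e. below any other upper bound (i.e. an essential supremum)
    (hlub : ∀ g : Ω → ℝ≥0∞,
      (∀ X : Ω → ℝ, Measurable[mT] X → (∃ C, ∀ ω, |X ω| ≤ C) →
        ∀ᵐ ω ∂P, ENNReal.ofReal (D ω * (Q[fun ω' => -X ω'|m0]) ω - ρt X ω) ≤ g ω) →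
      ∀ᵐ ω ∂P, ct ω ≤ g ω) :
    ∫⁻ ω, ct ω ∂P =
      ⨆ X : {X : Ω → ℝ // Measurable[mT] X ∧ ∃ C, ∀ ω, |X ω| ≤ C},
        ENNReal.ofReal (∫ ω, D ω * (Q[fun ω' => -(X.1 ω')|m0]) ω ∂P
          - ∫ ω, ρt X.1 ω ∂P) :=
  stmt10_general hm0 P Q hQt D hDmeas hDval ρt hmeas hnorm hreg ct hub hlub
end

section
/- Let (ρ_{t,T})_{t ∈ [0,T]} be a dynamic risk measure that is normalized (ρ_{t,T}(0) = 0) and cash-subadditive (ρ_{t,T}(X + m_t) ≥ ρ_{t,T}(X) − m_t for m_t ∈ L^∞₊(F_t)), and weakly time-consistent. Then for all 0 ≤ s ≤ t ≤ T and X ∈ L^∞(F_T): if ρ_{t,T}(X) ≤ 0 a.s. then ρ_{s,T}(X) ≤ ρ_{s,T}(−ρ_{t,T}(X)); and if ρ_{t,T}(X) ≥ 0 a.s. then ρ_{s,T}(X) ≥ ρ_{s,T}(−ρ_{t,T}(X)). -/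
/-!
For a normalized, cash-subadditive `r` and a bounded nonnegative `m`, cash-subadditivity applied
at `0` and at `-m` gives `-m ≤ r m` and `r (-m) ≤ m`. With `m = -ρ_t(X)`, resp. `m = ρ_t(X)`, this
compares `ρ_t(X)` with `ρ_t(-ρ_t(X))` at time `t`, and weak time-consistency carries the comparison
back to any `s ≤ t`.
-/

open MeasureTheory

section CashSubadditive

variable {Ω : Type*} {mΩ : MeasurableSpace Ω}

def IsCashSubadditive (P : Measure Ω) (G : MeasurableSpace Ω) (r : (Ω → ℝ) → Ω → ℝ) : Prop :=
  ∀ X m : Ω → ℝ, Measurable[G] m → (∃ C, ∀ ω, |m ω| ≤ C) → (∀ ω, 0 ≤ m ω) →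
    ∀ᵐ ω ∂P, r X ω - m ω ≤ r (fun ω' => X ω' + m ω') ω

variable {P : Measure Ω} {G : MeasurableSpace Ω} {r : (Ω → ℝ) → Ω → ℝ} {m : Ω → ℝ}

theorem IsCashSubadditive.neg_le_apply (hcsa : IsCashSubadditive P G r)
    (hnorm : ∀ᵐ ω ∂P, r 0 ω = 0) (hm : Measurable[G] m) (hb : ∃ C, ∀ ω, |m ω| ≤ C)
    (hpos : ∀ ω, 0 ≤ m ω) :
    ∀ᵐ ω ∂P, -m ω ≤ r m ω := by
  filter_upwards [hcsa 0 m hm hb hpos, hnorm] with ω hshift hzero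
  simp only [Pi.zero_apply, zero_add] at hshift
  linarith

theorem IsCashSubadditive.apply_neg_le (hcsa : IsCashSubadditive P G r)
    (hnorm : ∀ᵐ ω ∂P, r 0 ω = 0) (hm : Measurable[G] m) (hb : ∃ C, ∀ ω, |m ω| ≤ C)
    (hpos : ∀ ω, 0 ≤ m ω) :
    ∀ᵐ ω ∂P, r (fun ω' => -m ω') ω ≤ m ω := by
  filter_upwards [hcsa (fun ω' => -m ω') m hm hb hpos, hnorm] with ω hshift hzero
  simp only [neg_add_cancel] at hshift
  rw [← Pi.zero_def, hzero] at hshift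
  linarith

end CashSubadditive

theorem stmt13_general {Ω : Type*} {mΩ : MeasurableSpace Ω} (P : Measure Ω)
    (T : ℝ)
    (F : ℝ → MeasurableSpace Ω)
    (ρ : ℝ → (Ω → ℝ) → Ω → ℝ)
    -- each ρ_{t,T} maps into L^∞(F_t)
    (hmeas : ∀ t, 0 ≤ t → t ≤ T → ∀ X : Ω → ℝ,
      Measurable[F t] (ρ t X) ∧ ∃ C, ∀ ω, |ρ t X ω| ≤ C)
    -- normalization
    (hnorm : ∀ t, 0 ≤ t → t ≤ T → ∀ᵐ ω ∂P, ρ t 0 ω = 0)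
    -- cash-subadditivity w.r.t. nonnegative F_t-measurable bounded shifts
    (hcsa : ∀ t, 0 ≤ t → t ≤ T → ∀ X : Ω → ℝ, ∀ m : Ω → ℝ, Measurable[F t] m →
      (∃ C, ∀ ω, |m ω| ≤ C) → (∀ ω, 0 ≤ m ω) →
      ∀ᵐ ω ∂P, ρ t X ω - m ω ≤ ρ t (fun ω' => X ω' + m ω') ω)
    -- weak time-consistency
    (hwtc : ∀ s t, 0 ≤ s → s ≤ t → t ≤ T → ∀ X Y : Ω → ℝ,
      (∀ᵐ ω ∂P, ρ t Y ω ≤ ρ t X ω) → ∀ᵐ ω ∂P, ρ s Y ω ≤ ρ s X ω) :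
    ∀ s t, 0 ≤ s → s ≤ t → t ≤ T → ∀ X : Ω → ℝ,
      ((∀ ω, ρ t X ω ≤ 0) → ∀ᵐ ω ∂P, ρ s X ω ≤ ρ s (fun ω' => -(ρ t X ω')) ω) ∧
      ((∀ ω, 0 ≤ ρ t X ω) → ∀ᵐ ω ∂P, ρ s (fun ω' => -(ρ t X ω')) ω ≤ ρ s X ω) := by
  intro s t hs hst htT X
  have ht : 0 ≤ t := hs.trans hst
  have hcsa_t : IsCashSubadditive P (F t) (ρ t) := hcsa t ht htT
  obtain ⟨hmeasX, C, hbX⟩ := hmeas t ht htT X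
  refine ⟨fun hnonpos => hwtc s t hs hst htT _ X ?_, fun hnonneg => hwtc s t hs hst htT X _ ?_⟩
  · have hbound : ∃ C, ∀ ω, |-ρ t X ω| ≤ C := ⟨C, fun ω => (abs_neg _).trans_le (hbX ω)⟩
    simpa only [neg_neg] using hcsa_t.neg_le_apply (m := fun ω => -ρ t X ω) (hnorm t ht htT)
      hmeasX.neg hbound (fun ω => neg_nonneg.mpr (hnonpos ω))
  · exact hcsa_t.apply_neg_le (hnorm t ht htT) hmeasX ⟨C, hbX⟩ hnonneg

/-- A normalized, cash-subadditive, weakly time-consistent dynamic risk measure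
satisfies: if `ρ_{t,T}(X) ≤ 0` a.s. then `ρ_{s,T}(X) ≤ ρ_{s,T}(-ρ_{t,T}(X))`,
and if `ρ_{t,T}(X) ≥ 0` a.s. then `ρ_{s,T}(X) ≥ ρ_{s,T}(-ρ_{t,T}(X))`,
for all `0 ≤ s ≤ t ≤ T`. -/
theorem stmt13 {Ω : Type*} {mΩ : MeasurableSpace Ω} (P : Measure Ω) [IsProbabilityMeasure P]
    (T : ℝ) (hT : 0 ≤ T)
    (F : ℝ → MeasurableSpace Ω) (hFmono : Monotone F) (hF : ∀ t, F t ≤ mΩ)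
    (ρ : ℝ → (Ω → ℝ) → Ω → ℝ)
    -- each ρ_{t,T} maps into L^∞(F_t)
    (hmeas : ∀ t, 0 ≤ t → t ≤ T → ∀ X : Ω → ℝ,
      Measurable[F t] (ρ t X) ∧ ∃ C, ∀ ω, |ρ t X ω| ≤ C)
    -- normalization
    (hnorm : ∀ t, 0 ≤ t → t ≤ T → ∀ᵐ ω ∂P, ρ t 0 ω = 0)
    -- cash-subadditivity w.r.t. nonnegative F_t-measurable bounded shifts
    (hcsa : ∀ t, 0 ≤ t → t ≤ T → ∀ X : Ω → ℝ, ∀ m : Ω → ℝ, Measurable[F t] m →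
      (∃ C, ∀ ω, |m ω| ≤ C) → (∀ ω, 0 ≤ m ω) →
      ∀ᵐ ω ∂P, ρ t X ω - m ω ≤ ρ t (fun ω' => X ω' + m ω') ω)
    -- weak time-consistency
    (hwtc : ∀ s t, 0 ≤ s → s ≤ t → t ≤ T → ∀ X Y : Ω → ℝ,
      (∀ᵐ ω ∂P, ρ t Y ω ≤ ρ t X ω) → ∀ᵐ ω ∂P, ρ s Y ω ≤ ρ s X ω) :
    ∀ s t, 0 ≤ s → s ≤ t → t ≤ T → ∀ X : Ω → ℝ,
      ((∀ ω, ρ t X ω ≤ 0) → ∀ᵐ ω ∂P, ρ s X ω ≤ ρ s (fun ω' => -(ρ t X ω')) ω) ∧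
      ((∀ ω, 0 ≤ ρ t X ω) → ∀ᵐ ω ∂P, ρ s (fun ω' => -(ρ t X ω')) ω ≤ ρ s X ω) :=
  stmt13_general (mΩ := mΩ) P T F ρ hmeas hnorm hcsa hwtc
end

section
/- Let D¹, D² be adapted [0,1]-valued processes, Q₁, Q₂ probability measures, and suppose: (a) bifurcation stability—for any A ∈ F_s there exist D* and Q* with D*_{s,t} = 1_A D¹_{s,t} + 1_{A^c} D²_{s,t} and E_{Q*}[X|F_s] = 1_A E_{Q₁}[X|F_s] + 1_{A^c} E_{Q₂}[X|F_s] for all X ∈ L^∞(F_t); (b) generalized locality of the penalty c_{s,t}. Then for any fixed X ∈ L^∞(F_t), the set { D_{s,t} E_Q[−X|F_s] − c_{s,t}(DQ) : (D,Q) ∈ D × Q } contains an element equal a.s. to max_{i=1,2} { Dⁱ_{s,t} E_{Q_i}[−X|F_s] − c_{s,t}(Dⁱ Q_i) }; in particular this set is upward directed. -/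
/-!
Paste the two pairs along the `F_s`-set `A` where the first penalized value dominates the
second: bifurcation stability yields a pair `(D*, Q*)` that coincides with `(D¹, Q₁)` on `A` and
with `(D², Q₂)` on `Aᶜ`, and generalized locality transfers this coincidence to the penalty.
Hence the penalized value of `(D*, Q*)` is `max` of the two values almost surely.
-/

open MeasureTheory

section Pasting

variable {Ω : Type*} {ms mt mΩ : MeasurableSpace Ω}

def CondExpEqOn (ms mt : MeasurableSpace Ω) (P Q Q' : @Measure Ω mΩ) (S : Set Ω) : Prop :=
  ∀ X : Ω → ℝ, Measurable[mt] X → (∃ C, ∀ ω, |X ω| ≤ C) →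
    ∀ᵐ ω ∂P, ω ∈ S → (Q[X|ms]) ω = (Q'[X|ms]) ω

noncomputable def penalizedValue (ms : MeasurableSpace Ω)
    (c : (Ω → ℝ) → @Measure Ω mΩ → Ω → EReal) (X D : Ω → ℝ) (Q : @Measure Ω mΩ) :
    Ω → EReal :=
  fun ω => ((D ω * (Q[fun ω' => -X ω'|ms]) ω : ℝ) : EReal) - c D Q ω

lemma measurable_penalizedValue {c : (Ω → ℝ) → @Measure Ω mΩ → Ω → EReal} {X D : Ω → ℝ}
    {Q : @Measure Ω mΩ} (hD : Measurable[ms] D) (hc : Measurable[ms] (c D Q)) :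
    Measurable[ms] (penalizedValue ms c X D Q) :=
  (hD.mul stronglyMeasurable_condExp.measurable).coe_real_ereal.sub hc

lemma penalizedValue_ae_eq_on {P Q Q' : @Measure Ω mΩ} {S : Set Ω}
    {c : (Ω → ℝ) → @Measure Ω mΩ → Ω → EReal} {X D D' : Ω → ℝ}
    (hX : Measurable[mt] X) (hXb : ∃ C, ∀ ω, |X ω| ≤ C) (hQ : CondExpEqOn ms mt P Q Q' S)
    (hD : ∀ ω ∈ S, D ω = D' ω) (hc : ∀ᵐ ω ∂P, ω ∈ S → c D Q ω = c D' Q' ω) :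
    ∀ᵐ ω ∂P, ω ∈ S → penalizedValue ms c X D Q ω = penalizedValue ms c X D' Q' ω := by
  have hXb' : ∃ C, ∀ ω, |-X ω| ≤ C := by simpa only [abs_neg] using hXb
  filter_upwards [hQ (fun ω' => -X ω') hX.neg hXb', hc] with ω hQω hcω hω
  rw [penalizedValue, penalizedValue, hD ω hω, hQω hω, hcω hω]

end Pasting

lemma ae_eq_max_of_ae_eq_on {Ω α : Type*} {mΩ : MeasurableSpace Ω} [LinearOrder α]
    {μ : Measure Ω} {f g F : Ω → α}
    (hf : ∀ᵐ ω ∂μ, ω ∈ {ω | g ω ≤ f ω} → F ω = f ω)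
    (hg : ∀ᵐ ω ∂μ, ω ∈ {ω | g ω ≤ f ω}ᶜ → F ω = g ω) :
    ∀ᵐ ω ∂μ, F ω = max (f ω) (g ω) := by
  filter_upwards [hf, hg] with ω hfω hgω
  by_cases h : g ω ≤ f ω
  · rw [hfω h, max_eq_left h]
  · rw [hgω h, max_eq_right (le_of_not_ge h)]

theorem stmt19_general {Ω : Type*} {ms mt mΩ : MeasurableSpace Ω}
    (P : @Measure Ω mΩ)
    (Dset : Set (Ω → ℝ))
    (hDset : ∀ D ∈ Dset, Measurable[ms] D ∧ ∀ ω, D ω ∈ Set.Icc (0:ℝ) 1)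
    (Qset : Set (@Measure Ω mΩ))
    (c : (Ω → ℝ) → @Measure Ω mΩ → Ω → EReal)
    (hc : ∀ D ∈ Dset, ∀ Q ∈ Qset, Measurable[ms] (c D Q))
    (D1 D2 : Ω → ℝ) (hD1 : D1 ∈ Dset) (hD2 : D2 ∈ Dset)
    (Q1 Q2 : @Measure Ω mΩ) (hQ1 : Q1 ∈ Qset) (hQ2 : Q2 ∈ Qset)
    -- (a) bifurcation stability
    (hbif : ∀ A : Set Ω, MeasurableSet[ms] A →
      ∃ Dst ∈ Dset, ∃ Qst ∈ Qset,
        (∀ ω, Dst ω = A.indicator D1 ω + Aᶜ.indicator D2 ω) ∧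
        (∀ X : Ω → ℝ, Measurable[mt] X → (∃ C, ∀ ω, |X ω| ≤ C) →
          ∀ᵐ ω ∂P, (Qst[X|ms]) ω =
            A.indicator (Q1[X|ms]) ω + Aᶜ.indicator (Q2[X|ms]) ω))
    -- (b) generalized locality of the penalty
    (hlocal : ∀ D ∈ Dset, ∀ D' ∈ Dset, ∀ Q ∈ Qset, ∀ Q' ∈ Qset,
      ∀ A : Set Ω, MeasurableSet[ms] A →
      (∀ X : Ω → ℝ, Measurable[mt] X → (∃ C, ∀ ω, |X ω| ≤ C) →
        ∀ᵐ ω ∂P, ω ∈ A → (Q[X|ms]) ω = (Q'[X|ms]) ω) →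
      (∀ ω ∈ A, D ω = D' ω) →
      ∀ᵐ ω ∂P, ω ∈ A → c D Q ω = c D' Q' ω)
    (X : Ω → ℝ) (hX : Measurable[mt] X) (hXb : ∃ C, ∀ ω, |X ω| ≤ C) :
    ∃ Dst ∈ Dset, ∃ Qst ∈ Qset,
      ∀ᵐ ω ∂P,
        ((Dst ω * (Qst[fun ω' => -X ω'|ms]) ω : ℝ) : EReal) - c Dst Qst ω =
          max (((D1 ω * (Q1[fun ω' => -X ω'|ms]) ω : ℝ) : EReal) - c D1 Q1 ω)
              (((D2 ω * (Q2[fun ω' => -X ω'|ms]) ω : ℝ) : EReal) - c D2 Q2 ω) := by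
  set A : Set Ω := {ω | penalizedValue ms c X D2 Q2 ω ≤ penalizedValue ms c X D1 Q1 ω}
  have hA : MeasurableSet[ms] A :=
    measurableSet_le (measurable_penalizedValue (hDset D2 hD2).1 (hc D2 hD2 Q2 hQ2))
      (measurable_penalizedValue (hDset D1 hD1).1 (hc D1 hD1 Q1 hQ1))
  obtain ⟨Dst, hDst, Qst, hQst, hDeq, hQeq⟩ := hbif A hA
  have hQA : CondExpEqOn ms mt P Qst Q1 A := fun Y hY hYb =>
    (hQeq Y hY hYb).mono fun ω h hω => h.trans (by simp [hω])
  have hQAc : CondExpEqOn ms mt P Qst Q2 Aᶜ := fun Y hY hYb =>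
    (hQeq Y hY hYb).mono fun ω h hω => h.trans (by simp [Set.notMem_of_mem_compl hω, hω])
  have hDA : ∀ ω ∈ A, Dst ω = D1 ω := fun ω hω => (hDeq ω).trans (by simp [hω])
  have hDAc : ∀ ω ∈ Aᶜ, Dst ω = D2 ω := fun ω hω =>
    (hDeq ω).trans (by simp [Set.notMem_of_mem_compl hω, hω])
  exact ⟨Dst, hDst, Qst, hQst, ae_eq_max_of_ae_eq_on
    (penalizedValue_ae_eq_on hX hXb hQA hDA
      (hlocal Dst hDst D1 hD1 Qst hQst Q1 hQ1 A hA hQA hDA))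
    (penalizedValue_ae_eq_on hX hXb hQAc hDAc
      (hlocal Dst hDst D2 hD2 Qst hQst Q2 hQ2 Aᶜ hA.compl hQAc hDAc))⟩

/-- Under bifurcation stability of `(𝒟, 𝒬)` and generalized locality of the
penalty `c_{s,t}`, for any fixed `X ∈ L^∞(F_t)` and `D¹, D² ∈ 𝒟`,
`Q₁, Q₂ ∈ 𝒬`, the family `{ D_{s,t} E_Q[−X|F_s] − c_{s,t}(DQ) : (D,Q) ∈ 𝒟 × 𝒬 }`
contains an element equal a.s. to
`max_i { Dⁱ_{s,t} E_{Q_i}[−X|F_s] − c_{s,t}(Dⁱ Q_i) }`; in particular it is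
upward directed. -/
theorem stmt19 {Ω : Type*} {ms mt mΩ : MeasurableSpace Ω}
    (hms : ms ≤ mt) (hmt : mt ≤ mΩ)
    (P : @Measure Ω mΩ) [IsProbabilityMeasure P]
    (Dset : Set (Ω → ℝ))
    (hDset : ∀ D ∈ Dset, Measurable[ms] D ∧ ∀ ω, D ω ∈ Set.Icc (0:ℝ) 1)
    (Qset : Set (@Measure Ω mΩ))
    (hQset : ∀ Q ∈ Qset, IsProbabilityMeasure Q ∧ Q ≪ P)
    (c : (Ω → ℝ) → @Measure Ω mΩ → Ω → EReal)
    (hc : ∀ D ∈ Dset, ∀ Q ∈ Qset, Measurable[ms] (c D Q))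
    (D1 D2 : Ω → ℝ) (hD1 : D1 ∈ Dset) (hD2 : D2 ∈ Dset)
    (Q1 Q2 : @Measure Ω mΩ) (hQ1 : Q1 ∈ Qset) (hQ2 : Q2 ∈ Qset)
    -- (a) bifurcation stability
    (hbif : ∀ A : Set Ω, MeasurableSet[ms] A →
      ∃ Dst ∈ Dset, ∃ Qst ∈ Qset,
        (∀ ω, Dst ω = A.indicator D1 ω + Aᶜ.indicator D2 ω) ∧
        (∀ X : Ω → ℝ, Measurable[mt] X → (∃ C, ∀ ω, |X ω| ≤ C) →
          ∀ᵐ ω ∂P, (Qst[X|ms]) ω =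
            A.indicator (Q1[X|ms]) ω + Aᶜ.indicator (Q2[X|ms]) ω))
    -- (b) generalized locality of the penalty
    (hlocal : ∀ D ∈ Dset, ∀ D' ∈ Dset, ∀ Q ∈ Qset, ∀ Q' ∈ Qset,
      ∀ A : Set Ω, MeasurableSet[ms] A →
      (∀ X : Ω → ℝ, Measurable[mt] X → (∃ C, ∀ ω, |X ω| ≤ C) →
        ∀ᵐ ω ∂P, ω ∈ A → (Q[X|ms]) ω = (Q'[X|ms]) ω) →
      (∀ ω ∈ A, D ω = D' ω) →
      ∀ᵐ ω ∂P, ω ∈ A → c D Q ω = c D' Q' ω)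
    (X : Ω → ℝ) (hX : Measurable[mt] X) (hXb : ∃ C, ∀ ω, |X ω| ≤ C) :
    ∃ Dst ∈ Dset, ∃ Qst ∈ Qset,
      ∀ᵐ ω ∂P,
        ((Dst ω * (Qst[fun ω' => -X ω'|ms]) ω : ℝ) : EReal) - c Dst Qst ω =
          max (((D1 ω * (Q1[fun ω' => -X ω'|ms]) ω : ℝ) : EReal) - c D1 Q1 ω)
              (((D2 ω * (Q2[fun ω' => -X ω'|ms]) ω : ℝ) : EReal) - c D2 Q2 ω) :=
  stmt19_general P Dset hDset Qset c hc D1 D2 hD1 hD2 Q1 Q2 hQ1 hQ2 hbif hlocal X hX hXb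
end
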